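/- Let a ∈ ℂ^{N_D} be Wigner D-function coefficients with sparsity s_D = ‖a‖₀, and suppose that for each (m,μ) there is a cutoff n_max^{mμ} such that a_n^{mμ} ≠ 0 ⟹ n ≤ n_max^{mμ}. Then the Fourier coefficients b_{m'}^{mμ} = Σ_n i^{μ-m} Δ_n^{m',μ} Δ_n^{m',m} a_n^{mμ} vanish whenever |m'| > n_max^{mμ}, and hence the Fourier sparsity satisfies s_F ≤ Σ_{(m,μ): ∃n, a_n^{mμ}≠0} (2·n_max^{mμ} + 1). -/
import Mathlib


/-- The Wigner d-function `d_n^{μ m}(β)` defined by the explicit sum formula. -/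
noncomputable def wignerd (n μ m : ℤ) (β : ℝ) : ℝ :=
  (-1 : ℝ) ^ (μ - m) *
    Real.sqrt (((n + m).toNat.factorial : ℝ) * ((n - m).toNat.factorial : ℝ) *
      ((n + μ).toNat.factorial : ℝ) * ((n - μ).toNat.factorial : ℝ)) *
    ∑ σ ∈ Finset.Icc (max 0 (m - μ)) (min (n + m) (n - μ)),
      ((-1 : ℝ) ^ σ * Real.cos (β / 2) ^ (2 * n - 2 * σ + m - μ).toNat *
          Real.sin (β / 2) ^ (2 * σ - m + μ).toNat) /
        ((σ.toNat.factorial : ℝ) * ((n + m - σ).toNat.factorial : ℝ) *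
          ((n - μ - σ).toNat.factorial : ℝ) * ((μ - m + σ).toNat.factorial : ℝ))

open scoped Classical

/-- if the Wigner `D`-function coefficients in each `(m, μ)` subspace are
supported on `n ≤ n_max^{mμ}`, then the Fourier coefficients `b_{m'}^{mμ}` vanish for
`|m'| > n_max^{mμ}`, and the Fourier sparsity is bounded by
`Σ_{(m,μ) occupied} (2 n_max^{mμ} + 1)`. -/
theorem fourier_sparsity_cutoff_bound (nmax : ℕ) (a : ℤ → ℤ → ℤ → ℂ)
    (nmaxSub : ℤ → ℤ → ℕ) (hcut : ∀ n m μ : ℤ, a n m μ ≠ 0 → n ≤ (nmaxSub m μ : ℤ))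
    (b : ℤ → ℤ → ℤ → ℂ)
    (hb : ∀ m' m μ : ℤ, b m' m μ =
      ∑ n ∈ Finset.Icc (max |m| (max |μ| |m'|)) (nmax : ℤ),
        Complex.I ^ (μ - m) * ((wignerd n m' μ (Real.pi / 2) : ℝ) : ℂ) *
          ((wignerd n m' m (Real.pi / 2) : ℝ) : ℂ) * a n m μ) :
    (∀ m' m μ : ℤ, (nmaxSub m μ : ℤ) < |m'| → b m' m μ = 0) ∧
      ((Finset.Icc (-(nmax + 1) : ℤ) nmax ×ˢ Finset.Icc (-(nmax + 1) : ℤ) nmax ×ˢ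
          Finset.Icc (-(nmax + 1) : ℤ) nmax).filter
            (fun p => b p.1 p.2.1 p.2.2 ≠ 0)).card ≤
        ∑ q ∈ (Finset.Icc (-(nmax + 1) : ℤ) nmax ×ˢ
            Finset.Icc (-(nmax + 1) : ℤ) nmax).filter
              (fun q => ∃ n ∈ Finset.Icc (0 : ℤ) nmax, a n q.1 q.2 ≠ 0),
          (2 * nmaxSub q.1 q.2 + 1) := by

  have h1 : ∀ m' m μ : ℤ, (nmaxSub m μ : ℤ) < |m'| → b m' m μ = 0 := by
    intro m' m μ h
    rw [hb]
    apply Finset.sum_eq_zero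
    intro n hn
    rcases Finset.mem_Icc.mp hn with ⟨hn1, _⟩
    have ha : a n m μ = 0 := by
      by_contra ha
      have h2 := hcut n m μ ha
      have h3 : |m'| ≤ n := le_trans (le_trans (le_max_right _ _) (le_max_right _ _)) hn1
      linarith
    simp [ha]
  refine ⟨h1, ?_⟩
  have hsub : ((Finset.Icc (-(nmax + 1) : ℤ) nmax ×ˢ Finset.Icc (-(nmax + 1) : ℤ) nmax ×ˢ
          Finset.Icc (-(nmax + 1) : ℤ) nmax).filter
            (fun p => b p.1 p.2.1 p.2.2 ≠ 0)) ⊆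
      ((Finset.Icc (-(nmax + 1) : ℤ) nmax ×ˢ
            Finset.Icc (-(nmax + 1) : ℤ) nmax).filter
              (fun q => ∃ n ∈ Finset.Icc (0 : ℤ) nmax, a n q.1 q.2 ≠ 0)).biUnion
        (fun q => (Finset.Icc (-(nmaxSub q.1 q.2) : ℤ) (nmaxSub q.1 q.2)).image
          (fun m' => (m', q))) := by
    intro p hp
    rcases Finset.mem_filter.mp hp with ⟨hmem, hbne⟩
    rcases Finset.mem_product.mp hmem with ⟨hp1, hp23⟩
    rcases Finset.mem_product.mp hp23 with ⟨hp2, hp3⟩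
    apply Finset.mem_biUnion.mpr
    refine ⟨(p.2.1, p.2.2), ?_, ?_⟩
    · apply Finset.mem_filter.mpr
      refine ⟨Finset.mem_product.mpr ⟨hp2, hp3⟩, ?_⟩
      by_contra hno
      push_neg at hno
      apply hbne
      rw [hb]
      apply Finset.sum_eq_zero
      intro n hn
      rcases Finset.mem_Icc.mp hn with ⟨hn1, hn2⟩
      have hn0 : (0 : ℤ) ≤ n := le_trans (le_trans (abs_nonneg _) (le_max_left _ _)) hn1
      have := hno n (Finset.mem_Icc.mpr ⟨hn0, hn2⟩)
      simp [this]
    · apply Finset.mem_image.mpr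
      refine ⟨p.1, ?_, rfl⟩
      rw [Finset.mem_Icc, ← abs_le]
      by_contra habs
      push_neg at habs
      exact hbne (h1 p.1 p.2.1 p.2.2 habs)
  calc _ ≤ _ := Finset.card_le_card hsub
    _ ≤ _ := Finset.card_biUnion_le
    _ ≤ _ := by
        apply Finset.sum_le_sum
        intro q _
        calc ((Finset.Icc (-(nmaxSub q.1 q.2) : ℤ) (nmaxSub q.1 q.2)).image
              (fun m' => (m', q))).card
            ≤ (Finset.Icc (-(nmaxSub q.1 q.2) : ℤ) (nmaxSub q.1 q.2)).card :=
              Finset.card_image_le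
          _ ≤ 2 * nmaxSub q.1 q.2 + 1 := by
              rw [Int.card_Icc]
              omega
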